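/- Let G = (V, E) be an undirected graph on n vertices and G_p the random subgraph keeping each edge independently with probability p ∈ (0, 1). Then with high probability the density satisfies ρ(G_p) ∈ [(1 − ε)·p·ρ(G) − O(log n / ε), (1 + ε)·p·ρ(G) + O(log n / ε)]. -/

import Mathlib

open Finset
open scoped NNRat Classical

/-- Degree of `u` inside `S` in the undirected graph with edge set `F`. -/
def edegIn {n : ℕ} (F : Finset (Sym2 (Fin n))) (S : Finset (Fin n)) (u : Fin n) : ℕ :=
  (S.filter fun w => w ≠ u ∧ s(u, w) ∈ F).card

/-- Minimum degree of the induced subgraph on `S`. -/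
def emindegIn {n : ℕ} (F : Finset (Sym2 (Fin n))) (S : Finset (Fin n)) : ℕ :=
  if h : S.Nonempty then S.inf' h (edegIn F S) else 0

/-- Coreness of `v` in the undirected graph with edge set `F`. -/
def coreE {n : ℕ} (F : Finset (Sym2 (Fin n))) (v : Fin n) : ℕ :=
  ((univ : Finset (Fin n)).powerset.filter fun S => v ∈ S).sup (emindegIn F)

/-- Density of the undirected graph with edge set `F`: the maximum over nonempty
`S` of `|F[S]| / |S|`. -/
def densE {n : ℕ} (F : Finset (Sym2 (Fin n))) : ℚ≥0 :=
  ((univ : Finset (Fin n)).powerset.filter fun S => S.Nonempty).sup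
    fun S => ((F ∩ S.sym2).card : ℚ≥0) / (S.card : ℚ≥0)

/-- Arboricity via Nash-Williams: `max` over `S` with `|S| ≥ 2` of `⌈|F[S]|/(|S|−1)⌉`. -/
def arbE {n : ℕ} (F : Finset (Sym2 (Fin n))) : ℕ :=
  ((univ : Finset (Fin n)).powerset.filter fun S => 2 ≤ S.card).sup
    fun S => ⌈((F ∩ S.sym2).card : ℚ) / ((S.card : ℚ) - 1)⌉₊

/-- The probability, when each edge of `E0` is kept independently with probability `p`,
that the resulting random edge subset satisfies `A`. -/
noncomputable def probE {n : ℕ} (E0 : Finset (Sym2 (Fin n))) (p : ℝ)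
    (A : Finset (Sym2 (Fin n)) → Prop) : ℝ :=
  ∑ F ∈ E0.powerset,
    if A F then p ^ F.card * (1 - p) ^ (E0.card - F.card) else 0


/-!
For a fixed nonempty vertex set `S`, the number of sampled edges inside `S` is binomial with
at most `ρ(G)·|S|` trials, so the exponential-moment (Chernoff) bound makes it exceed
`((1 + ε)·p·ρ(G) + t)·|S|` with probability at most `e^{-εt|S|/2}`. With `t = 20 log n / ε` a
union bound over all `S` costs only `O(n⁻⁹)`. For the lower bound a single densest set `S*` of `G`
suffices: its sampled edge count drops below `((1 - ε)·p·ρ(G) - t)·|S*|` with probability at most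
`e^{-εt}`.
-/
namespace EdgeSampling

open Real

variable {n : ℕ} {E₀ T : Finset (Sym2 (Fin n))} {p : ℝ}

def sampleWeight (E₀ F : Finset (Sym2 (Fin n))) (p : ℝ) : ℝ :=
  p ^ #F * (1 - p) ^ (#E₀ - #F)

lemma sampleWeight_nonneg (hp₀ : 0 ≤ p) (hp₁ : p ≤ 1) (F : Finset (Sym2 (Fin n))) :
    0 ≤ sampleWeight E₀ F p :=
  mul_nonneg (pow_nonneg hp₀ _) (pow_nonneg (sub_nonneg.2 hp₁) _)

lemma sum_sampleWeight (E₀ : Finset (Sym2 (Fin n))) (p : ℝ) :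
    ∑ F ∈ E₀.powerset, sampleWeight E₀ F p = 1 := by
  simp [sampleWeight, Finset.sum_pow_mul_eq_add_pow]

lemma sum_sampleWeight_mul_pow_card_inter (E₀ T : Finset (Sym2 (Fin n))) (p x : ℝ) :
    ∑ F ∈ E₀.powerset, sampleWeight E₀ F p * x ^ #(F ∩ T) = (1 - p + p * x) ^ #(E₀ ∩ T) := by
  have hfactor : ∀ e,
      p * (if e ∈ T then x else 1) + (1 - p) = if e ∈ T then 1 - p + p * x else 1 := by
    intro e; split_ifs <;> ring
  have hterm : ∀ F ∈ E₀.powerset,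
      (∏ e ∈ F, p * (if e ∈ T then x else 1)) * ∏ _e ∈ E₀ \ F, (1 - p)
        = sampleWeight E₀ F p * x ^ #(F ∩ T) := by
    intro F hF
    rw [Finset.prod_mul_distrib, Finset.prod_const, Finset.prod_ite_mem, Finset.prod_const,
      Finset.prod_const, Finset.card_sdiff_of_subset (Finset.mem_powerset.1 hF), sampleWeight]
    ring
  rw [← Finset.sum_congr rfl hterm, ← Finset.prod_add, Finset.prod_congr rfl fun e _ => hfactor e,
    Finset.prod_ite_mem, Finset.prod_const]

lemma probE_def (A : Finset (Sym2 (Fin n)) → Prop) :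
    probE E₀ p A = ∑ F ∈ E₀.powerset, if A F then sampleWeight E₀ F p else 0 := rfl

lemma probE_compl (A : Finset (Sym2 (Fin n)) → Prop) :
    probE E₀ p A = 1 - probE E₀ p (fun F => ¬ A F) := by
  rw [eq_sub_iff_add_eq, probE_def, probE_def, ← Finset.sum_add_distrib, ← sum_sampleWeight E₀ p]
  exact Finset.sum_congr rfl fun F _ => by split_ifs <;> simp_all

lemma probE_le_sum {ι : Type*} (hp₀ : 0 ≤ p) (hp₁ : p ≤ 1) {A : Finset (Sym2 (Fin n)) → Prop}
    (s : Finset ι) (B : ι → Finset (Sym2 (Fin n)) → Prop) (h : ∀ F, A F → ∃ i ∈ s, B i F) :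
    probE E₀ p A ≤ ∑ i ∈ s, probE E₀ p (B i) := by
  simp only [probE_def]
  rw [Finset.sum_comm]
  refine Finset.sum_le_sum fun F _ => ?_
  have hw := sampleWeight_nonneg (E₀ := E₀) hp₀ hp₁ F
  split_ifs with hA
  · obtain ⟨i, hi, hB⟩ := h F hA
    refine le_trans (le_of_eq (if_pos hB).symm)
      (Finset.single_le_sum (f := fun i => if B i F then sampleWeight E₀ F p else 0)
        (fun j _ => by split_ifs <;> simp [hw]) hi)
  · exact Finset.sum_nonneg fun j _ => by split_ifs <;> simp [hw]

lemma probE_mono (hp₀ : 0 ≤ p) (hp₁ : p ≤ 1) {A B : Finset (Sym2 (Fin n)) → Prop}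
    (h : ∀ F, A F → B F) : probE E₀ p A ≤ probE E₀ p B := by
  simpa using probE_le_sum hp₀ hp₁ {()} (fun _ => B)
    fun F hF => ⟨(), Finset.mem_singleton_self _, h F hF⟩

lemma probE_or_le (hp₀ : 0 ≤ p) (hp₁ : p ≤ 1) (A B : Finset (Sym2 (Fin n)) → Prop) :
    probE E₀ p (fun F => A F ∨ B F) ≤ probE E₀ p A + probE E₀ p B := by
  simpa using probE_le_sum hp₀ hp₁ Finset.univ (fun b : Bool => if b then A else B)
    fun F hF => hF.elim (fun hA => ⟨true, by simp, hA⟩) fun hB => ⟨false, by simp, hB⟩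

lemma probE_le_exp_of_le_mul_card (hp₀ : 0 ≤ p) (hp₁ : p ≤ 1) (T : Finset (Sym2 (Fin n)))
    {A : Finset (Sym2 (Fin n)) → Prop} (s θ : ℝ) (hA : ∀ F, A F → θ ≤ s * #(F ∩ T)) :
    probE E₀ p A ≤ exp (p * (exp s - 1) * #(E₀ ∩ T) - θ) := by
  -- Markov's inequality for `exp (s * #(F ∩ T))`, whose mean is
  -- `(1 - p + p * exp s) ^ #(E₀ ∩ T)`.
  calc probE E₀ p A
      ≤ ∑ F ∈ E₀.powerset, sampleWeight E₀ F p * exp s ^ #(F ∩ T) * exp (-θ) := by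
        refine Finset.sum_le_sum fun F _ => ?_
        have hw := sampleWeight_nonneg (E₀ := E₀) hp₀ hp₁ F
        split_ifs with hF
        · have : 1 ≤ exp s ^ #(F ∩ T) * exp (-θ) := by
            rw [← exp_nat_mul, ← exp_add, one_le_exp_iff]
            linarith [hA F hF]
          exact (le_mul_of_one_le_right hw this).trans_eq (mul_assoc _ _ _).symm
        · positivity
    _ = (1 + p * (exp s - 1)) ^ #(E₀ ∩ T) * exp (-θ) := by
        rw [← Finset.sum_mul, sum_sampleWeight_mul_pow_card_inter]
        ring_nf
    _ ≤ exp (p * (exp s - 1)) ^ #(E₀ ∩ T) * exp (-θ) := by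
        gcongr
        · nlinarith [exp_pos s]
        · linarith [add_one_le_exp (p * (exp s - 1))]
    _ = exp (p * (exp s - 1) * #(E₀ ∩ T) - θ) := by
        rw [← exp_nat_mul, ← exp_add]
        ring_nf

lemma probE_card_inter_ge_le (hp₀ : 0 ≤ p) (hp₁ : p ≤ 1) {ε t M : ℝ} (hε₀ : 0 < ε) (hε₁ : ε ≤ 1)
    (ht : 0 ≤ t) (hM : (#(E₀ ∩ T) : ℝ) ≤ M) :
    probE E₀ p (fun F => (1 + ε) * p * M + t ≤ #(F ∩ T)) ≤ exp (-(ε * t / 2)) := by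
  set ℓ := log (1 + ε)
  have hℓ : ε ≤ (1 + ε) * ℓ := by
    simpa using self_sub_one_le_mul_log (x := 1 + ε) (by linarith)
  have hℓ₂ : ε / 2 ≤ ℓ := by
    nlinarith [log_nonneg (x := 1 + ε) (by linarith)]
  have hM₀ : 0 ≤ M := le_trans (Nat.cast_nonneg _) hM
  refine (probE_le_exp_of_le_mul_card hp₀ hp₁ T ℓ (ℓ * ((1 + ε) * p * M + t))
    fun F hF => mul_le_mul_of_nonneg_left hF (by linarith)).trans ?_
  rw [exp_le_exp, exp_log (by linarith)]
  nlinarith [mul_le_mul_of_nonneg_left hℓ (mul_nonneg hp₀ hM₀),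
    mul_le_mul_of_nonneg_left hM (mul_nonneg hp₀ hε₀.le), mul_le_mul_of_nonneg_right hℓ₂ ht]

lemma probE_card_inter_le_le (hp₀ : 0 ≤ p) (hp₁ : p ≤ 1) {ε t : ℝ} (hε₀ : 0 < ε) (hε₁ : ε < 1)
    (ht : 0 ≤ t) :
    probE E₀ p (fun F => (#(F ∩ T) : ℝ) ≤ (1 - ε) * p * #(E₀ ∩ T) - t) ≤ exp (-(ε * t)) := by
  set ℓ := log (1 - ε)
  have hℓ : ℓ ≤ -ε := by linarith [log_le_sub_one_of_pos (x := 1 - ε) (by linarith)]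
  have hℓ₂ : -ε ≤ (1 - ε) * ℓ := by
    simpa using self_sub_one_le_mul_log (x := 1 - ε) (by linarith)
  refine (probE_le_exp_of_le_mul_card hp₀ hp₁ T ℓ (ℓ * ((1 - ε) * p * #(E₀ ∩ T) - t))
    fun F hF => mul_le_mul_of_nonpos_left hF (by linarith)).trans ?_
  rw [exp_le_exp, exp_log (by linarith)]
  have hm : (0 : ℝ) ≤ #(E₀ ∩ T) := Nat.cast_nonneg _
  nlinarith [mul_le_mul_of_nonneg_left hℓ₂ (mul_nonneg hp₀ hm), mul_le_mul_of_nonneg_right hℓ ht]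

lemma div_le_densE (F : Finset (Sym2 (Fin n))) {S : Finset (Fin n)} (hS : S.Nonempty) :
    (#(F ∩ S.sym2) : ℝ) / #S ≤ densE F := by
  have h : (#(F ∩ S.sym2) : ℚ≥0) / #S ≤ densE F :=
    Finset.le_sup (f := fun S => (#(F ∩ S.sym2) : ℚ≥0) / #S) (by simpa using hS)
  have h' := NNRat.cast_le (K := ℝ) |>.2 h
  rwa [NNRat.cast_div, NNRat.cast_natCast, NNRat.cast_natCast] at h'

lemma exists_densE_eq (hn : 0 < n) (F : Finset (Sym2 (Fin n))) :
    ∃ S : Finset (Fin n), S.Nonempty ∧ (densE F : ℝ) * #S = #(F ∩ S.sym2) := by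
  obtain ⟨S, hS, hsup⟩ := Finset.exists_mem_eq_sup
    ((univ : Finset (Fin n)).powerset.filter fun S => S.Nonempty) ⟨{⟨0, hn⟩}, by simp⟩
    fun S : Finset (Fin n) => (#(F ∩ S.sym2) : ℚ≥0) / #S
  have hS : S.Nonempty := (Finset.mem_filter.1 hS).2
  refine ⟨S, hS, ?_⟩
  rw [densE, hsup, NNRat.cast_div, NNRat.cast_natCast, NNRat.cast_natCast,
    div_mul_cancel₀ _ (by exact_mod_cast hS.card_pos.ne')]

lemma exists_lt_card_of_lt_densE (hn : 0 < n) (F : Finset (Sym2 (Fin n))) {D : ℝ}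
    (h : D < densE F) : ∃ S : Finset (Fin n), S.Nonempty ∧ D * #S < #(F ∩ S.sym2) := by
  obtain ⟨S, hS, hdens⟩ := exists_densE_eq hn F
  exact ⟨S, hS, hdens ▸ mul_lt_mul_of_pos_right h (by exact_mod_cast hS.card_pos)⟩

lemma probE_densE_gt_le (hn : 0 < n) (hp₀ : 0 ≤ p) (hp₁ : p ≤ 1) {ε t : ℝ} (hε₀ : 0 < ε)
    (hε₁ : ε ≤ 1) (ht : 0 ≤ t) :
    probE E₀ p (fun F => (1 + ε) * p * densE E₀ + t < densE F)
      ≤ ∑ S : Finset (Fin n) with S.Nonempty, exp (-(ε * t / 2 * #S)) := by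
  refine (probE_le_sum hp₀ hp₁ _
    (fun S F => (1 + ε) * p * (densE E₀ * #S) + t * #S ≤ #(F ∩ S.sym2)) fun F hF => ?_).trans
    (Finset.sum_le_sum fun S hS => ?_)
  · obtain ⟨S, hS, hlt⟩ := exists_lt_card_of_lt_densE hn F hF
    exact ⟨S, by simpa using hS, by linarith⟩
  · have hS : S.Nonempty := (Finset.mem_filter.1 hS).2
    have hk : (0 : ℝ) < #S := by exact_mod_cast hS.card_pos
    have hM : (#(E₀ ∩ S.sym2) : ℝ) ≤ densE E₀ * #S :=
      (div_le_iff₀ hk).1 (div_le_densE E₀ hS)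
    refine (probE_card_inter_ge_le hp₀ hp₁ hε₀ hε₁ (by positivity) hM).trans_eq ?_
    ring_nf

lemma probE_densE_lt_le (hn : 0 < n) (hp₀ : 0 ≤ p) (hp₁ : p ≤ 1) {ε t : ℝ} (hε₀ : 0 < ε)
    (hε₁ : ε < 1) (ht : 0 ≤ t) :
    probE E₀ p (fun F => densE F < (1 - ε) * p * densE E₀ - t) ≤ exp (-(ε * t)) := by
  obtain ⟨S, hS, hdens⟩ := exists_densE_eq hn E₀
  have hk : (1 : ℝ) ≤ #S := by exact_mod_cast hS.card_pos
  refine (probE_mono hp₀ hp₁ fun F hF => ?_).trans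
    ((probE_card_inter_le_le (T := S.sym2) hp₀ hp₁ hε₀ hε₁ (by positivity : 0 ≤ t * #S)).trans ?_)
  · have := (div_le_iff₀ (by linarith)).1 ((div_le_densE F hS).trans hF.le)
    rw [← hdens]
    linarith
  · rw [exp_le_exp]
    nlinarith [mul_le_mul_of_nonneg_left hk (mul_nonneg hε₀.le ht)]

lemma sum_exp_neg_mul_log_card_le {n : ℕ} (hn : 2 ≤ n) :
    ∑ S : Finset (Fin n) with S.Nonempty, exp (-(10 * log n * #S)) + exp (-(20 * log n))
      ≤ (n : ℝ)⁻¹ := by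
  set q : ℝ := (n : ℝ)⁻¹
  have hn₀ : (0 : ℝ) < n := by positivity
  have hq₀ : 0 ≤ q := by positivity
  have hq : q ≤ 1 / 2 := by
    rw [inv_le_comm₀ hn₀ (by norm_num)]; norm_num; exact_mod_cast hn
  have hexp : ∀ k : ℕ, exp (-(k * log n)) = q ^ k := fun k => by
    rw [exp_neg, exp_nat_mul, exp_log hn₀, inv_pow]
  have hterm : ∀ S : Finset (Fin n), S.Nonempty → exp (-(10 * log n * #S)) ≤ q ^ 9 * q ^ #S :=
    fun S hS => by
      rw [← pow_add, show 10 * log n * #S = ((10 * #S : ℕ) : ℝ) * log n by push_cast; ring, hexp]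
      exact pow_le_pow_of_le_one hq₀ (by linarith) (by have := hS.card_pos; omega)
  have hsum : ∑ S : Finset (Fin n), q ^ #S ≤ 3 := by
    have h := Fintype.sum_pow_mul_eq_add_pow (Fin n) q 1
    simp only [one_pow, mul_one, Fintype.card_fin] at h
    rw [h, add_comm]
    linarith [one_add_inv_pow_le_exp (n := n), exp_one_lt_d9]
  have h8 : q ^ 8 ≤ 1 / 256 := by
    calc q ^ 8 ≤ (1 / 2) ^ 8 := pow_le_pow_left₀ hq₀ hq 8
      _ = 1 / 256 := by norm_num
  have h19 : q ^ 19 ≤ q ^ 8 := pow_le_pow_of_le_one hq₀ (by linarith) (by norm_num)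
  calc ∑ S : Finset (Fin n) with S.Nonempty, exp (-(10 * log n * #S)) + exp (-(20 * log n))
      ≤ ∑ S : Finset (Fin n), q ^ 9 * q ^ #S + q ^ 20 := by
        gcongr
        · exact (Finset.sum_le_sum fun S hS => hterm S (Finset.mem_filter.1 hS).2).trans
            (Finset.sum_le_sum_of_subset_of_nonneg (Finset.filter_subset _ _)
              fun _ _ _ => by positivity)
        · exact (hexp 20).le.trans' (by norm_num)
    _ ≤ q ^ 9 * 3 + q ^ 20 := by rw [← Finset.mul_sum]; gcongr
    _ = q * (3 * q ^ 8 + q ^ 19) := by ring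
    _ ≤ q := by nlinarith

lemma edgeFinset_eq_empty_of_lt_two {n : ℕ} (hn : n < 2) (G : SimpleGraph (Fin n))
    [DecidableRel G.Adj] : G.edgeFinset = ∅ := by
  have : Subsingleton (Fin n) := Fin.subsingleton_iff_le_one.2 (by omega)
  ext e
  induction e using Sym2.ind with
  | _ a b => simp


end EdgeSampling

open EdgeSampling Real in
/-- Sampling each edge independently with probability `p`, with high probability the density
satisfies `ρ(G_p) ∈ [(1 − ε)·p·ρ(G) − O(log n / ε), (1 + ε)·p·ρ(G) + O(log n / ε)]`. -/
theorem density_sample_whp :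
    ∃ C c : ℝ, 0 < C ∧ 0 < c ∧
      ∀ (n : ℕ) (G : SimpleGraph (Fin n)) [DecidableRel G.Adj] (p ε : ℝ),
        0 < p → p < 1 → 0 < ε → ε < 1 →
        1 - (n : ℝ) ^ (-c) ≤
          probE G.edgeFinset p (fun F =>
            (1 - ε) * p * (densE G.edgeFinset : ℝ) - C * Real.log n / ε
                ≤ (densE F : ℝ) ∧
              (densE F : ℝ) ≤
                (1 + ε) * p * (densE G.edgeFinset : ℝ) + C * Real.log n / ε) := by
  refine ⟨20, 1, by norm_num, by norm_num, fun n G _ p ε hp₀ hp₁ hε₀ hε₁ => ?_⟩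
  have ht : 0 ≤ 20 * log n / ε := by have := log_natCast_nonneg n; positivity
  rcases lt_or_ge n 2 with hn | hn
  · rw [edgeFinset_eq_empty_of_lt_two hn]
    have hρ : densE (∅ : Finset (Sym2 (Fin n))) = 0 := (Finset.sup_eq_bot_iff _ _).2 (by simp)
    simp [probE, hρ, ht]
    positivity
  · have hn₀ : 0 < n := by omega
    have hεt : ε * (20 * log n / ε) = 20 * log n := by field_simp
    rw [rpow_neg_one, probE_compl, sub_le_sub_iff_left]
    calc _ ≤ probE G.edgeFinset p (fun F =>
            (1 + ε) * p * densE G.edgeFinset + 20 * log n / ε < densE F ∨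
              densE F < (1 - ε) * p * densE G.edgeFinset - 20 * log n / ε) :=
          probE_mono hp₀.le hp₁.le fun F hF => by contrapose! hF; exact ⟨hF.2, hF.1⟩
      _ ≤ _ := probE_or_le hp₀.le hp₁.le _ _
      _ ≤ ∑ S : Finset (Fin n) with S.Nonempty, exp (-(10 * log n * #S)) + exp (-(20 * log n)) := by
          gcongr
          · refine (probE_densE_gt_le hn₀ hp₀.le hp₁.le hε₀ hε₁.le ht).trans_eq
              (Finset.sum_congr rfl fun S _ => ?_)
            rw [hεt]; ring_nf
          · exact (probE_densE_lt_le hn₀ hp₀.le hp₁.le hε₀ hε₁ ht).trans_eq (by rw [hεt])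
      _ ≤ (n : ℝ)⁻¹ := sum_exp_neg_mul_log_card_le hn
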